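/- Under Assumption 2.2 and the condition σ/(4eβ) ≤ C₁ ≤ (1/2)·max{σ/β, 1/4}, the first mesh step size of the mesh generated by φ satisfies h₀ = (σε/β)·ln(N/(N−4)), and consequently (4σ/β)·ε·N⁻¹ ≤ h₀ ≤ (8σ/β)·ε·N⁻¹. -/

import Mathlib

/-- The Bakhvalov-type mesh generating function of Kopteva, with transition
parameter `ϑ = 1/4 - C₁ ε`. -/
noncomputable def phi (β σ ε C₁ : ℝ) (t : ℝ) : ℝ :=
  if t ≤ 1/4 - C₁ * ε then -(σ * ε / β) * Real.log (1 - 4 * t)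
  else if t < 1 - (1/4 - C₁ * ε) then
    ((1 + (σ * ε / β) * Real.log (4 * C₁ * ε)) / (1 - 2 * (1/4 - C₁ * ε)))
        * (t - (1/4 - C₁ * ε))
      + ((σ * ε / β) * Real.log (4 * C₁ * ε) / (1 - 2 * (1/4 - C₁ * ε)))
        * (t - (1 - (1/4 - C₁ * ε)))
  else 1 + (σ * ε / β) * Real.log (1 - 4 * (1 - t))

/-- Mesh points `x_i = φ(i/N)`. -/
noncomputable def meshXK (β σ ε C₁ : ℝ) (N i : ℕ) : ℝ := phi β σ ε C₁ ((i : ℝ) / (N : ℝ))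

/-- Mesh step sizes `h_i = x_{i+1} - x_i`. -/
noncomputable def meshHK (β σ ε C₁ : ℝ) (N i : ℕ) : ℝ :=
  meshXK β σ ε C₁ N (i + 1) - meshXK β σ ε C₁ N i

/-!
The first mesh interval `[0, 1/N]` lies in the layer `[0, ϑ]`, where `φ` is the logarithmic
map, so `h₀ = -(σε/β) ln(1 - 4/N) = (σε/β) ln(N/(N-4))`. The layer condition `1/N ≤ ϑ` holds
because the two-sided constraints on `C₁` and `ε` combine to `C₁ε ≤ 1/(8N)`. The bounds on `h₀`
come from `1 - 1/x ≤ ln x ≤ x - 1` at `x = N/(N-4)`, together with `4/(N-4) ≤ 8/N` for `N ≥ 8`.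
-/

lemma max_div_mul_min_div_eq {β σ : ℝ} (hβ : 0 < β) (hσ : 0 < σ) :
    max (σ / β) (1 / 4) * min (β / (4 * σ)) 1 = 1 / 4 := by
  rcases le_total (σ / β) (1 / 4) with h | h
  · have h' : 1 ≤ β / (4 * σ) := by
      rw [div_le_iff₀ hβ] at h
      rw [le_div_iff₀ (by positivity)]
      linarith
    rw [max_eq_right h, min_eq_right h', mul_one]
  · have h' : β / (4 * σ) ≤ 1 := by
      rw [le_div_iff₀ hβ] at h
      rw [div_le_iff₀ (by positivity)]
      linarith
    rw [max_eq_left h, min_eq_left h']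
    field_simp

lemma mul_le_div_eight_of_le_max_of_le_min {β σ ε C₁ m : ℝ} (hβ : 0 < β) (hσ : 0 < σ) (hε : 0 ≤ ε)
    (hεm : ε ≤ min (β / (4 * σ)) 1 * m) (hC₁ : C₁ ≤ 1 / 2 * max (σ / β) (1 / 4)) :
    C₁ * ε ≤ m / 8 :=
  calc C₁ * ε ≤ 1 / 2 * max (σ / β) (1 / 4) * (min (β / (4 * σ)) 1 * m) :=
        mul_le_mul hC₁ hεm hε (by positivity)
    _ = 1 / 2 * (max (σ / β) (1 / 4) * min (β / (4 * σ)) 1) * m := by ring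
    _ = m / 8 := by rw [max_div_mul_min_div_eq hβ hσ]; ring

lemma phi_of_le {β σ ε C₁ t : ℝ} (ht : t ≤ 1 / 4 - C₁ * ε) :
    phi β σ ε C₁ t = -(σ * ε / β) * Real.log (1 - 4 * t) :=
  if_pos ht

lemma meshHK_zero_eq {β σ ε C₁ : ℝ} {N : ℕ} (hN : 0 < N) (hlayer : (N : ℝ)⁻¹ ≤ 1 / 4 - C₁ * ε) :
    meshHK β σ ε C₁ N 0 = σ * ε / β * Real.log ((N : ℝ) / ((N : ℝ) - 4)) := by
  have hN' : (N : ℝ) ≠ 0 := by positivity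
  have h0 : (0 : ℝ) ≤ 1 / 4 - C₁ * ε := le_trans (by positivity) hlayer
  have hinv : (N : ℝ) / ((N : ℝ) - 4) = (1 - 4 * (N : ℝ)⁻¹)⁻¹ := by
    field_simp
  simp only [meshHK, meshXK, Nat.cast_zero, Nat.cast_one, zero_div, zero_add, one_div]
  rw [phi_of_le hlayer, phi_of_le h0, hinv, Real.log_inv]
  simp

lemma log_div_sub_four_bounds {n : ℝ} (hn : 8 ≤ n) :
    4 / n ≤ Real.log (n / (n - 4)) ∧ Real.log (n / (n - 4)) ≤ 8 / n := by
  have hn4 : n - 4 ≠ 0 := by linarith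
  have hpos : 0 < n / (n - 4) := div_pos (by linarith) (by linarith)
  constructor
  · calc 4 / n = 1 - (n / (n - 4))⁻¹ := by field_simp; ring
      _ ≤ Real.log (n / (n - 4)) := Real.one_sub_inv_le_log_of_pos hpos
  · calc Real.log (n / (n - 4)) ≤ n / (n - 4) - 1 := Real.log_le_sub_one_of_pos hpos
      _ = 4 / (n - 4) := by field_simp; ring
      _ ≤ 8 / n := by
        rw [div_le_div_iff₀ (by linarith) (by linarith)]
        linarith

theorem stmt_13_general (β σ ε C₁ : ℝ) (N : ℕ)
    (hβ : 0 < β) (hσ : 0 < σ) (hε0 : 0 < ε)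
    (hN : max 8 (2 * Real.log (σ / β)) ≤ (N : ℝ))
    (hεN : ε ≤ min (β / (4 * σ)) 1 * (N : ℝ)⁻¹)
    (hC₁u : C₁ ≤ 1 / 2 * max (σ / β) (1 / 4)) :
    meshHK β σ ε C₁ N 0 = σ * ε / β * Real.log ((N : ℝ) / ((N : ℝ) - 4)) ∧
    4 * σ / β * ε * (N : ℝ)⁻¹ ≤ meshHK β σ ε C₁ N 0 ∧
    meshHK β σ ε C₁ N 0 ≤ 8 * σ / β * ε * (N : ℝ)⁻¹ := by
  have hN8 : (8 : ℝ) ≤ N := le_trans (le_max_left _ _) hN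
  have hNpos : 0 < N := by exact_mod_cast (show (0 : ℝ) < N by linarith)
  have hshift := mul_le_div_eight_of_le_max_of_le_min hβ hσ hε0.le hεN hC₁u
  have hlayer : (N : ℝ)⁻¹ ≤ 1 / 4 - C₁ * ε := by
    have : (N : ℝ)⁻¹ ≤ 1 / 8 := by rw [inv_le_comm₀ (by positivity) (by norm_num)]; linarith
    linarith
  have hstep := meshHK_zero_eq (β := β) (σ := σ) hNpos hlayer
  obtain ⟨hlo, hhi⟩ := log_div_sub_four_bounds hN8
  refine ⟨hstep, ?_, ?_⟩
  · calc 4 * σ / β * ε * (N : ℝ)⁻¹ = σ * ε / β * (4 / N) := by ring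
      _ ≤ _ := by rw [hstep]; gcongr
  · calc meshHK β σ ε C₁ N 0 ≤ σ * ε / β * (8 / N) := by rw [hstep]; gcongr
      _ = 8 * σ / β * ε * (N : ℝ)⁻¹ := by ring

theorem stmt_13 (β σ ε C₁ : ℝ) (N : ℕ)
    (hβ : 0 < β) (hσ : 0 < σ) (hε0 : 0 < ε) (hε1 : ε < 1)
    (hN4 : 4 ∣ N) (hN : max 8 (2 * Real.log (σ / β)) ≤ (N : ℝ))
    (hεN : ε ≤ min (β / (4 * σ)) 1 * (N : ℝ)⁻¹)
    (hC₁l : σ / (4 * Real.exp 1 * β) ≤ C₁)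
    (hC₁u : C₁ ≤ 1 / 2 * max (σ / β) (1 / 4)) :
    meshHK β σ ε C₁ N 0 = σ * ε / β * Real.log ((N : ℝ) / ((N : ℝ) - 4)) ∧
    4 * σ / β * ε * (N : ℝ)⁻¹ ≤ meshHK β σ ε C₁ N 0 ∧
    meshHK β σ ε C₁ N 0 ≤ 8 * σ / β * ε * (N : ℝ)⁻¹ :=
  stmt_13_general β σ ε C₁ N hβ hσ hε0 hN hεN hC₁u
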